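/- A function O : {0,1}^6 → {-1,1} is the output of some three-module one-trit classical sequential processor if and only if the 4×16 matrix A1 defined by A1[(X1,X2)][(X3,X4,X5,X6)] = O(X1,...,X6) has at most 3 distinct rows and the 16×4 matrix A2 defined by A2[(X1,X2,X3,X4)][(X5,X6)] = O(X1,...,X6) has at most 3 distinct rows. -/

import Mathlib

/-!
The trit `g1 (x₁, x₂)` determines the row `O (x₁, x₂, ·)` and the trit `g2 (g1 (x₁, x₂)) (x₃, x₄)`
determines the row `O (x₁, …, x₄, ·)`, so both reshapings have at most three rows. Conversely, a
map with at most three values factors through `Fin 3` with every label realised by a value. Label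
the rows of both reshapings; take for `g1` the first labelling, for `g2 s` the second labelling
at a representative `(x₁, x₂)` of the label `s`, and for `g3` the (±1-valued) labelled rows of the
second reshaping.
-/

/-- Domain of six input bits. -/
abbrev Bits6 := Fin 2 × Fin 2 × Fin 2 × Fin 2 × Fin 2 × Fin 2

/-- Output of a three-module one-trit classical sequential processor given by the
module strategies `g1`, `g2`, `g3`. -/
def output3trit (g1 : Fin 2 × Fin 2 → Fin 3) (g2 : Fin 3 → Fin 2 × Fin 2 → Fin 3)
    (g3 : Fin 3 → Fin 2 × Fin 2 → ℤ) : Bits6 → ℤ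
  | (x1, x2, x3, x4, x5, x6) => g3 (g2 (g1 (x1, x2)) (x3, x4)) (x5, x6)

open Function Set

theorem ncard_range_comp_le {α β : Type*} {n : ℕ} (d : Fin n → β) (e : α → Fin n) :
    (range (d ∘ e)).ncard ≤ n := calc
  (range (d ∘ e)).ncard ≤ (range d).ncard := ncard_le_ncard (range_comp_subset_range e d)
  _ ≤ Nat.card (Fin n) := (Nat.card_coe_set_eq _).symm.trans_le (Finite.card_range_le d)
  _ = n := Nat.card_fin n

theorem exists_fin_factorization_of_ncard_range_le {α β : Type*} [Finite α] [Nonempty α] {n : ℕ}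
    (f : α → β) (h : (range f).ncard ≤ n) :
    ∃ (e : α → Fin n) (d : Fin n → β), f = d ∘ e ∧ range d ⊆ range f := by
  let ι : range f → Fin n :=
    Fin.castLE ((Nat.card_coe_set_eq _).trans_le h) ∘ Finite.equivFin (range f)
  have hι : Injective ι := (Fin.castLE_injective _).comp (Finite.equivFin _).injective
  have : Nonempty (range f) := (range_nonempty f).to_subtype
  refine ⟨fun a => ι ⟨f a, mem_range_self a⟩, fun i => (invFun ι i : range f), ?_,
    range_subset_iff.2 fun i => (invFun ι i).2⟩
  funext a
  exact congrArg Subtype.val (leftInverse_invFun hι ⟨f a, mem_range_self a⟩).symm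

/-- existence criterion, one-trit case: a ±1-valued function `O` on six bits
is the output of some three-module one-trit classical sequential processor iff both the
4×16 reshaping and the 16×4 reshaping of `O` have at most 3 distinct rows. -/
theorem stmt3 (O : Bits6 → ℤ) (hO : ∀ x, O x = -1 ∨ O x = 1) :
    (∃ (g1 : Fin 2 × Fin 2 → Fin 3) (g2 : Fin 3 → Fin 2 × Fin 2 → Fin 3)
        (g3 : Fin 3 → Fin 2 × Fin 2 → ℤ),
      (∀ s p, g3 s p = -1 ∨ g3 s p = 1) ∧ O = output3trit g1 g2 g3) ↔
    ((Set.range (fun p : Fin 2 × Fin 2 =>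
        fun q : Fin 2 × Fin 2 × Fin 2 × Fin 2 =>
          O (p.1, p.2, q.1, q.2.1, q.2.2.1, q.2.2.2))).ncard ≤ 3 ∧
     (Set.range (fun p : Fin 2 × Fin 2 × Fin 2 × Fin 2 =>
        fun q : Fin 2 × Fin 2 =>
          O (p.1, p.2.1, p.2.2.1, p.2.2.2, q.1, q.2))).ncard ≤ 3) := by
  constructor
  · rintro ⟨g1, g2, g3, -, rfl⟩
    exact ⟨ncard_range_comp_le
        (fun s (q : Fin 2 × Fin 2 × Fin 2 × Fin 2) => g3 (g2 s (q.1, q.2.1)) (q.2.2.1, q.2.2.2)) g1,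
      ncard_range_comp_le g3 fun p : Fin 2 × Fin 2 × Fin 2 × Fin 2 =>
        g2 (g1 (p.1, p.2.1)) (p.2.2.1, p.2.2.2)⟩
  · rintro ⟨h1, h2⟩
    obtain ⟨e1, d1, hR1, hd1⟩ := exists_fin_factorization_of_ncard_range_le _ h1
    obtain ⟨e2, d2, hR2, hd2⟩ := exists_fin_factorization_of_ncard_range_le _ h2
    choose r hr using fun s => hd1 (mem_range_self s)
    have hrep : ∀ p, (fun q : Fin 2 × Fin 2 × Fin 2 × Fin 2 =>
        O ((r (e1 p)).1, (r (e1 p)).2, q.1, q.2.1, q.2.2.1, q.2.2.2)) =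
        fun q => O (p.1, p.2, q.1, q.2.1, q.2.2.1, q.2.2.2) :=
      fun p => (hr (e1 p)).trans (congrFun hR1 p).symm
    refine ⟨e1, fun s c => e2 ((r s).1, (r s).2, c.1, c.2), d2, fun s c => ?_, ?_⟩
    · obtain ⟨p, hp⟩ := hd2 (mem_range_self s)
      rw [← hp]
      exact hO _
    · funext ⟨x1, x2, x3, x4, x5, x6⟩
      calc O (x1, x2, x3, x4, x5, x6)
          = O ((r (e1 (x1, x2))).1, (r (e1 (x1, x2))).2, x3, x4, x5, x6) :=
            (congrFun (hrep (x1, x2)) (x3, x4, x5, x6)).symm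
        _ = _ := congrFun (congrFun hR2 ((r (e1 (x1, x2))).1, (r (e1 (x1, x2))).2, x3, x4)) (x5, x6)
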